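/- arXiv:2506.08444 — 3 statements merged into one kernel-verified Lean document; each statement's English description precedes it below -/
import Mathlib

section
/- Let d_1,…,d_n be reals with d_1 = 1, and for 1 ≤ i, l ≤ n set S_{il} = Σ_{j=1}^{l} d_{ij}. Then: S_{il} = 0 if l ≥ i > 1; S_{il} = −(∏_{k=l+1}^{i−1}(1−d_k))·d_i if l < i; and S_{il} = 1 if i = 1 and l ≥ 1. -/
open Finset

/-- The matrix entries `d_{ij}`: `0` for `i < j`, `d_i` for `i = j`, and
`-d_j · (∏_{k=j+1}^{i-1} (1 - d_k)) · d_i` for `i > j`. -/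
def Dmat (n : ℕ) (d : Fin n → ℝ) : Matrix (Fin n) (Fin n) ℝ :=
  Matrix.of fun i j =>
    if i < j then 0
    else if i = j then d i
    else -(d j) * (∏ k ∈ Finset.Ioo j i, (1 - d k)) * d i

lemma Iic_succ_fin {n : ℕ} (m : ℕ) (h : m + 1 < n) :
    (Finset.Iic (⟨m + 1, h⟩ : Fin n)) = insert ⟨m + 1, h⟩ (Finset.Iic ⟨m, by omega⟩) := by
  ext x
  simp [Fin.le_def, Fin.ext_iff]
  omega

lemma Ioo_split_fin {n : ℕ} (m : ℕ) (i : Fin n) (h : m + 1 < (i : ℕ)) :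
    (Finset.Ioo (⟨m, by omega⟩ : Fin n) i) =
      insert ⟨m + 1, by omega⟩ (Finset.Ioo ⟨m + 1, by omega⟩ i) := by
  ext x
  simp only [Finset.mem_Ioo, Finset.mem_insert, Fin.lt_def, Fin.ext_iff]
  omega

lemma key (n : ℕ) (hn : 0 < n) (d : Fin n → ℝ) (hd1 : d ⟨0, hn⟩ = 1) :
    ∀ m : ℕ, ∀ i : Fin n, ∀ hm : m < (i : ℕ),
      ∑ j ∈ Finset.Iic (⟨m, hm.trans i.isLt⟩ : Fin n), Dmat n d i j =
        -(∏ k ∈ Finset.Ioo (⟨m, hm.trans i.isLt⟩ : Fin n) i, (1 - d k)) * d i := by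
  intro m
  induction m with
  | zero =>
    intro i hm
    have hIic : (Finset.Iic (⟨0, hm.trans i.isLt⟩ : Fin n)) = {⟨0, hn⟩} := by
      ext x
      simp only [Finset.mem_Iic, Finset.mem_singleton, Fin.le_def, Fin.ext_iff]
      omega
    rw [hIic, Finset.sum_singleton]
    have h1 : ¬ (i < (⟨0, hn⟩ : Fin n)) := by
      simp [Fin.lt_def]
    have h2 : i ≠ ⟨0, hn⟩ := by
      intro h; rw [h] at hm; simp at hm
    simp only [Dmat, Matrix.of_apply, if_neg h1, if_neg h2, hd1]
    ring_nf
  | succ m ih =>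
    intro i hm
    have hm' : m < (i : ℕ) := by omega
    rw [Iic_succ_fin m (hm.trans i.isLt), Finset.sum_insert (by
      simp [Fin.le_def])]
    rw [ih i hm']
    have hlt : ¬ (i < (⟨m + 1, hm.trans i.isLt⟩ : Fin n)) := by
      simp [Fin.lt_def]; omega
    have hne : i ≠ ⟨m + 1, hm.trans i.isLt⟩ := by
      intro h
      have := congrArg Fin.val h
      simp at this; omega
    simp only [Dmat, Matrix.of_apply, if_neg hlt, if_neg hne]
    rw [Ioo_split_fin m i hm, Finset.prod_insert (by simp [Fin.lt_def])]
    ring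

theorem stmt_0 (n : ℕ) (hn : 2 ≤ n) (d : Fin n → ℝ)
    (hd1 : d ⟨0, by omega⟩ = 1)
    (S : Fin n → Fin n → ℝ)
    (hS : ∀ i l : Fin n, S i l = ∑ j ∈ Finset.Iic l, Dmat n d i j) :
    ∀ i l : Fin n,
      (i ≤ l → 0 < (i : ℕ) → S i l = 0) ∧
      (l < i → S i l = -(∏ k ∈ Finset.Ioo l i, (1 - d k)) * d i) ∧
      ((i : ℕ) = 0 → S i l = 1) := by
  have hn0 : 0 < n := by omega
  intro i l
  refine ⟨?_, ?_, ?_⟩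
  · intro hil hi
    rw [hS]
    -- restrict sum to Iic i
    have hsub : Finset.Iic i ⊆ Finset.Iic l := Finset.Iic_subset_Iic.2 hil
    rw [← Finset.sum_subset hsub (fun x _ hx => by
      simp only [Finset.mem_Iic, not_le] at hx
      simp [Dmat, hx])]
    -- i = ⟨m+1, _⟩ for some m
    obtain ⟨iv, hiv⟩ := i
    simp only at hi
    obtain ⟨m, rfl⟩ : ∃ m, iv = m + 1 := ⟨iv - 1, by omega⟩
    rw [Iic_succ_fin m hiv, Finset.sum_insert (by simp [Fin.le_def])]
    have hkey := key n hn0 d hd1 m ⟨m + 1, hiv⟩ (by simp)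
    rw [hkey]
    have hIoo : Finset.Ioo (⟨m, by omega⟩ : Fin n) ⟨m + 1, hiv⟩ = ∅ := by
      ext x
      simp [Fin.lt_def]
    rw [hIoo]
    simp [Dmat]
  · intro hli
    rw [hS]
    have := key n hn0 d hd1 l i hli
    simpa using this
  · intro hi0
    rw [hS]
    have hi : i = ⟨0, by omega⟩ := by
      ext; exact hi0
    rw [hi]
    rw [Finset.sum_eq_single (⟨0, by omega⟩ : Fin n)]
    · simp [Dmat, hd1]
    · intro b _ hb
      have hb' : (0 : ℕ) < (b : ℕ) := by
        rcases Nat.eq_zero_or_pos (b : ℕ) with h | h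
        · exact absurd (Fin.ext h) hb
        · exact h
      have : (⟨0, by omega⟩ : Fin n) < b := by simpa [Fin.lt_def] using hb'
      simp [Dmat, this]
    · intro h
      exact absurd (by simp [Fin.le_def]) h
end

section
/- Let d_1,…,d_n be reals with d_1 = d_n = 1, and for 1 ≤ l, j ≤ n set V_{lj} = Σ_{i=l}^{n} d_{ij}. Then: V_{lj} = 0 if l ≤ j < n; V_{lj} = −d_j·(∏_{k=j+1}^{l−1}(1−d_k)) if l > j; and V_{lj} = 1 if j = n and l ≤ n. -/
/-!
If `d_k` is the probability that a trial `k` succeeds, `d_i ∏_{j<k<i} (1 - d_k)` is the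
probability that the first success after `j` happens at `i`. Summing over `i > l` telescopes to
`∏_{j<k≤l} (1 - d_k) - ∏_{k>j} (1 - d_k)`, which expresses every column sum `V_{lj}` through
`∏_{k>j} (1 - d_k)`; this product vanishes for `j < n` because `d_n = 1`.
-/

open Finset Matrix

section Telescoping

variable {α R : Type*} [LinearOrder α] [LocallyFiniteOrder α] [LocallyFiniteOrderTop α]
  [SuccOrder α] [WellFoundedGT α] [CommRing R]

theorem sum_Ioi_mul_prod_Ioo_one_sub (f : α → R) {j l : α} (hjl : j ≤ l) :
    ∑ i ∈ Ioi l, f i * ∏ k ∈ Ioo j i, (1 - f k) =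
      ∏ k ∈ Ioc j l, (1 - f k) - ∏ k ∈ Ioi j, (1 - f k) := by
  induction l using WellFoundedGT.induction with
  | _ l ih =>
  by_cases hl : IsMax l
  · have hIoc : Ioc j l = Ioi j := by
      ext k
      simpa [mem_Ioc, mem_Ioi] using fun _ => hl.not_lt
    rw [hl.finsetIoi_eq, sum_empty, hIoc, sub_self]
  · have hsucc : l < Order.succ l := Order.lt_succ_of_not_isMax hl
    rw [← Ici_succ_eq_Ioi_of_not_isMax hl, Ici_eq_cons_Ioi, sum_cons,
      ih _ hsucc (hjl.trans hsucc.le), Ioo_succ_right_eq_Ioc_of_not_isMax hl,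
      ← insert_Ioc_right_eq_Ioc_succ_of_not_isMax hjl hl, prod_insert fun hmem => hsucc.not_ge (mem_Ioc.1 hmem).2]
    ring

end Telescoping

section Dmat

variable {n : ℕ} {d : Fin n → ℝ} {i j l : Fin n}

theorem Dmat_of_lt (h : i < j) : Dmat n d i j = 0 := by
  simp only [Dmat, Matrix.of_apply, if_pos h]

theorem Dmat_self : Dmat n d j j = d j := by
  simp only [Dmat, Matrix.of_apply, lt_self_iff_false, if_false, if_true]

theorem Dmat_of_gt (h : j < i) :
    Dmat n d i j = -d j * (d i * ∏ k ∈ Ioo j i, (1 - d k)) := by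
  simp only [Dmat, Matrix.of_apply, if_neg h.not_gt, if_neg h.ne']
  ring

theorem sum_Ioi_Dmat (h : j ≤ l) :
    ∑ i ∈ Ioi l, Dmat n d i j =
      -d j * (∏ k ∈ Ioc j l, (1 - d k) - ∏ k ∈ Ioi j, (1 - d k)) := by
  rw [← sum_Ioi_mul_prod_Ioo_one_sub d h, mul_sum]
  exact sum_congr rfl fun i hi => Dmat_of_gt (h.trans_lt (mem_Ioi.1 hi))

theorem sum_Ici_Dmat_of_le (h : l ≤ j) :
    ∑ i ∈ Ici l, Dmat n d i j = d j * ∏ k ∈ Ioi j, (1 - d k) := by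
  have hIci : ∑ i ∈ Ici l, Dmat n d i j = ∑ i ∈ Ici j, Dmat n d i j :=
    (sum_subset (Ici_subset_Ici.2 h) fun i _ hi => Dmat_of_lt (not_le.1 (mt mem_Ici.2 hi))).symm
  rw [hIci, Ici_eq_cons_Ioi, sum_cons, Dmat_self, sum_Ioi_Dmat le_rfl, Ioc_self, prod_empty]
  ring

theorem sum_Ici_Dmat_of_lt (h : j < l) :
    ∑ i ∈ Ici l, Dmat n d i j =
      -d j * (∏ k ∈ Ioo j l, (1 - d k) - ∏ k ∈ Ioi j, (1 - d k)) := by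
  rw [Ici_eq_cons_Ioi, sum_cons, Dmat_of_gt h, sum_Ioi_Dmat h.le, ← Ioo_insert_right h,
    prod_insert right_notMem_Ioo]
  ring

end Dmat

theorem stmt_1 (n : ℕ) (hn : 2 ≤ n) (d : Fin n → ℝ)
    (hdn : d ⟨n - 1, by omega⟩ = 1)
    (V : Fin n → Fin n → ℝ)
    (hV : ∀ l j : Fin n, V l j = ∑ i ∈ Finset.Ici l, Dmat n d i j) :
    ∀ l j : Fin n,
      (l ≤ j → (j : ℕ) + 1 < n → V l j = 0) ∧
      (j < l → V l j = -(d j) * ∏ k ∈ Finset.Ioo j l, (1 - d k)) ∧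
      ((j : ℕ) + 1 = n → V l j = 1) := by
  intro l j
  have hprod : (j : ℕ) + 1 < n → ∏ k ∈ Ioi j, (1 - d k) = 0 := fun hj =>
    prod_eq_zero (i := ⟨n - 1, by omega⟩) (mem_Ioi.2 (Fin.lt_def.2 (by simp; omega)))
      (by rw [hdn, sub_self])
  refine ⟨fun hlj hj => ?_, fun hjl => ?_, fun hj => ?_⟩
  · rw [hV, sum_Ici_Dmat_of_le hlj, hprod hj, mul_zero]
  · rw [hV, sum_Ici_Dmat_of_lt hjl, hprod (by omega), sub_zero]
  · have hjlast : j = ⟨n - 1, by omega⟩ := Fin.ext (by simp; omega)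
    have hIoi : Ioi j = ∅ := Ioi_eq_empty.2 fun k _ => Fin.le_def.2 (by omega)
    rw [hV, sum_Ici_Dmat_of_le (Fin.le_def.2 (by omega)), hIoi, prod_empty, mul_one, hjlast, hdn]
end

section
/- Let c_1,…,c_n be reals and let d_1,…,d_n be reals with d_1 = d_n = 1 and d_i ≠ 0 for all i. Then D·F·D = D·C − C·D, i.e. D·F·D equals the commutator [D, C]. -/
/-!
`D` is invertible when all `d_i ≠ 0`: its inverse `E` has ones strictly below the diagonal and
`d_i⁻¹` on it, because the partial column sums of `D` telescope by
`∏ (1 - d_k) = 1 - ∑_k d_k ∏_{l < k} (1 - d_l)`. Since `F = C E - E C`,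
`D F D = D C (E D) - (D E) C D = D C - C D`.
-/

open Finset Matrix
/-- The matrix `F` with `F_{ij} = c_i - c_j` for `i > j` and `0` otherwise. -/
def Fmat (n : ℕ) (c : Fin n → ℝ) : Matrix (Fin n) (Fin n) ℝ :=
  Matrix.of fun i j => if j < i then c i - c j else 0

noncomputable def Emat (n : ℕ) (d : Fin n → ℝ) : Matrix (Fin n) (Fin n) ℝ :=
  Matrix.of (fun i j => if j < i then 1 else 0) + diagonal fun i => (d i)⁻¹

theorem mul_commutator_mul_of_mul_eq_one {R : Type*} [Ring R] {a b : R} (c : R)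
    (hab : a * b = 1) (hba : b * a = 1) :
    a * (c * b - b * c) * a = a * c - c * a := by
  calc a * (c * b - b * c) * a = a * c * (b * a) - (a * b) * c * a := by noncomm_ring
    _ = a * c - c * a := by rw [hab, hba, mul_one, one_mul]

theorem Fmat_eq_diagonal_mul_Emat_sub (n : ℕ) (c d : Fin n → ℝ) :
    Fmat n c = diagonal c * Emat n d - Emat n d * diagonal c := by
  ext i j
  by_cases hij : i = j
  · subst hij
    simp [Fmat, Emat, mul_comm]
  · simp only [Fmat, Emat, Matrix.sub_apply, diagonal_mul, mul_diagonal, Matrix.add_apply,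
      of_apply, diagonal_apply, hij, if_false, add_zero]
    split_ifs <;> ring

theorem sum_Iio_Dmat_apply {n : ℕ} (d : Fin n → ℝ) {i j : Fin n} (hji : j < i) :
    ∑ k ∈ Iio i, Dmat n d k j = d j * ∏ l ∈ Ioo j i, (1 - d l) := by
  have h_below : ∀ k ∈ Iio i, k ∉ Ico j i → Dmat n d k j = 0 := by
    intro k hk hk'
    have hkj : k < j := by simp only [mem_Iio, mem_Ico] at hk hk'; grind
    simp [Dmat, hkj]
  have h_strict : ∀ k ∈ Ioo j i,
      Dmat n d k j = -d j * (d k * ∏ l ∈ Ioo j i with l < k, (1 - d l)) := by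
    intro k hk
    rw [mem_Ioo] at hk
    rw [Ioo_filter_lt, min_eq_right hk.2.le]
    simp only [Dmat, of_apply, not_lt_of_gt hk.1, hk.1.ne', if_false]
    ring
  rw [← sum_subset Ico_subset_Iio_self h_below, ← Ioo_insert_left hji,
    sum_insert left_notMem_Ioo, sum_congr rfl h_strict, ← mul_sum, prod_one_sub_ordered]
  simp only [Dmat, of_apply, lt_self_iff_false, ↓reduceIte]
  ring

theorem Emat_mul_apply {n : ℕ} (d : Fin n → ℝ) (A : Matrix (Fin n) (Fin n) ℝ) (i j : Fin n) :
    (Emat n d * A) i j = ∑ k ∈ Iio i, A k j + (d i)⁻¹ * A i j := by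
  rw [Emat, Matrix.add_mul, Matrix.add_apply, diagonal_mul, mul_apply]
  simp only [of_apply, ite_mul, one_mul, zero_mul, sum_ite, sum_const_zero, add_zero,
    filter_gt_eq_Iio]

theorem Emat_mul_Dmat {n : ℕ} (d : Fin n → ℝ) (hd : ∀ i, d i ≠ 0) :
    Emat n d * Dmat n d = 1 := by
  ext i j
  rw [Emat_mul_apply]
  rcases lt_trichotomy i j with hij | rfl | hji
  · have h_zero : ∀ k ∈ Iio i, Dmat n d k j = 0 := fun k hk =>
      if_pos ((mem_Iio.mp hk).trans hij)
    rw [sum_eq_zero h_zero]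
    simp [Dmat, hij, hij.ne]
  · have h_zero : ∀ k ∈ Iio i, Dmat n d k i = 0 := fun k hk => if_pos (mem_Iio.mp hk)
    rw [sum_eq_zero h_zero]
    simp [Dmat, hd i]
  · rw [sum_Iio_Dmat_apply d hji, one_apply_ne hji.ne']
    simp only [Dmat, of_apply, not_lt_of_gt hji, hji.ne', if_false]
    field_simp [hd i]
    ring

theorem stmt_8 (n : ℕ) (c d : Fin n → ℝ)
    (hd : ∀ i : Fin n, d i ≠ 0) :
    Dmat n d * Fmat n c * Dmat n d =
      Dmat n d * Matrix.diagonal c - Matrix.diagonal c * Dmat n d := by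
  have hED := Emat_mul_Dmat d hd
  rw [Fmat_eq_diagonal_mul_Emat_sub n c d]
  exact mul_commutator_mul_of_mul_eq_one _ (mul_eq_one_comm.mp hED) hED
end
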